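/- Discrete pointwise bounds for the tumor variable (u-component of Theorem 'Pointwise bounds'): suppose u^m_K ∈ [0,1] for every cell K and u : 𝒦 → ℝ solves the discrete u-equation of the upwind DG scheme for some data μ, ν, n : 𝒦 → ℝ. Then u_K ∈ [0,1] for every cell K. -/

import Mathlib

/-- The degenerate mobility `M(v) = K ⬝ (v)₊^p ⬝ (1-v)₊^q`. -/
noncomputable def M (Km : ℝ) (p q : ℕ) (v : ℝ) : ℝ :=
  Km * max v 0 ^ p * max (1 - v) 0 ^ q

/-- The point `v* = p/(p+q)` where the maximum of `M` is attained. -/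
noncomputable def vstar (p q : ℕ) : ℝ := (p:ℝ) / ((p:ℝ) + (q:ℝ))

/-- Increasing part of the mobility. -/
noncomputable def Mup (Km : ℝ) (p q : ℕ) (v : ℝ) : ℝ :=
  if v ≤ vstar p q then M Km p q v else M Km p q (vstar p q)

/-- Decreasing part of the mobility. -/
noncomputable def Mdown (Km : ℝ) (p q : ℕ) (v : ℝ) : ℝ :=
  if v ≤ vstar p q then 0 else M Km p q v - M Km p q (vstar p q)

/-- The upwind edge flux `Φ_{K,L}(μ, v)` between adjacent cells `K` and `L`. -/
noncomputable def Phi (Km : ℝ) (p q : ℕ) {𝒦 : Type*} (μ v : 𝒦 → ℝ) (a b : 𝒦) : ℝ :=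
  max (μ a - μ b) 0 * max (Mup Km p q (v a) + Mdown Km p q (v b)) 0
    - max (-(μ a - μ b)) 0 * max (Mup Km p q (v b) + Mdown Km p q (v a)) 0

/-- The proliferation function `P(u, n) = K_P ⬝ (u)₊^r ⬝ (1-u)₊^s ⬝ (n)₊`. -/
noncomputable def prolif (KP : ℝ) (r s : ℕ) (u n : ℝ) : ℝ :=
  KP * max u 0 ^ r * max (1 - u) 0 ^ s * max n 0

/-!
If `u_K < 0`, the proliferation term vanishes and so does the upwind mobility of every flux
leaving `K` (`M↑` is zero below `0`, and `M↓ ≤ 0` because `v*` maximizes `M`, by weighted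
AM-GM). Hence nothing leaves `K`, so `u_K ≥ u^m_K ≥ 0`, a contradiction. Symmetrically, if
`u_K > 1` then `M↓(u_K) = -M(v*)` blocks every incoming flux and `u_K ≤ u^m_K ≤ 1`.
-/

section Mobility

variable {p q : ℕ}

lemma vstar_pos (hp : 0 < p) : 0 < vstar p q := by
  unfold vstar; positivity

lemma one_sub_vstar (hp : 0 < p) : 1 - vstar p q = q / (p + q) := by
  have : (0 : ℝ) < p := by exact_mod_cast hp
  rw [vstar]; field_simp; ring

lemma vstar_lt_one (hp : 0 < p) (hq : 0 < q) : vstar p q < 1 := by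
  have : (0 : ℝ) < q := by exact_mod_cast hq
  have : 0 < 1 - vstar p q := by rw [one_sub_vstar hp]; positivity
  linarith

/-- Weighted AM-GM with weights `v*` and `1 - v*` applied to `x / v*` and `(1 - x) / (1 - v*)`,
raised to the power `p + q`. -/
lemma pow_mul_one_sub_pow_le (hp : 0 < p) (hq : 0 < q) {x : ℝ} (hx₀ : 0 ≤ x) (hx₁ : x ≤ 1) :
    x ^ p * (1 - x) ^ q ≤ vstar p q ^ p * (1 - vstar p q) ^ q := by
  set a := vstar p q
  have ha₀ : 0 < a := vstar_pos hp
  have ha₁ : 0 < 1 - a := sub_pos.2 (vstar_lt_one hp hq)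
  have hpq : (0 : ℝ) < p + q := by positivity
  have hy : 0 ≤ x / a := by positivity
  have hz : 0 ≤ (1 - x) / (1 - a) := div_nonneg (by linarith) ha₁.le
  have amgm : (x / a) ^ a * ((1 - x) / (1 - a)) ^ (1 - a) ≤ 1 := by
    calc _ ≤ a * (x / a) + (1 - a) * ((1 - x) / (1 - a)) :=
          Real.geom_mean_le_arith_mean2_weighted ha₀.le ha₁.le hy hz (by ring)
      _ = 1 := by field_simp; ring
  have hexp₁ : a * (p + q) = p := by simp only [a, vstar]; field_simp
  have hexp₂ : (1 - a) * (p + q) = q := by rw [one_sub_vstar hp]; field_simp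
  have key : (x / a) ^ p * ((1 - x) / (1 - a)) ^ q ≤ 1 := by
    have := Real.rpow_le_one (by positivity) amgm hpq.le
    rwa [Real.mul_rpow (by positivity) (by positivity), ← Real.rpow_mul hy, ← Real.rpow_mul hz,
      hexp₁, hexp₂, Real.rpow_natCast, Real.rpow_natCast] at this
  calc x ^ p * (1 - x) ^ q = (x / a) ^ p * ((1 - x) / (1 - a)) ^ q * (a ^ p * (1 - a) ^ q) := by
        rw [div_pow, div_pow]; field_simp
    _ ≤ 1 * (a ^ p * (1 - a) ^ q) := by gcongr
    _ = a ^ p * (1 - a) ^ q := one_mul _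

lemma M_eq_zero_of_nonpos (Km : ℝ) (hp : 0 < p) {v : ℝ} (hv : v ≤ 0) : M Km p q v = 0 := by
  simp [M, max_eq_right hv, hp.ne']

lemma M_eq_zero_of_one_le (Km : ℝ) (hq : 0 < q) {v : ℝ} (hv : 1 ≤ v) : M Km p q v = 0 := by
  simp [M, max_eq_right (sub_nonpos.2 hv), hq.ne']

lemma M_le_M_vstar {Km : ℝ} (hKm : 0 ≤ Km) (hp : 0 < p) (hq : 0 < q) (v : ℝ) :
    M Km p q v ≤ M Km p q (vstar p q) := by
  have hmax : M Km p q (vstar p q) = Km * (vstar p q ^ p * (1 - vstar p q) ^ q) := by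
    rw [M, max_eq_left (vstar_pos hp).le, max_eq_left (sub_pos.2 (vstar_lt_one hp hq)).le]; ring
  have hnonneg : 0 ≤ M Km p q (vstar p q) := by unfold M; positivity
  rcases le_or_gt v 0 with hv₀ | hv₀
  · rwa [M_eq_zero_of_nonpos Km hp hv₀]
  rcases le_or_gt 1 v with hv₁ | hv₁
  · rwa [M_eq_zero_of_one_le Km hq hv₁]
  rw [hmax, M, max_eq_left hv₀.le, max_eq_left (sub_pos.2 hv₁).le, mul_assoc]
  exact mul_le_mul_of_nonneg_left (pow_mul_one_sub_pow_le hp hq hv₀.le hv₁.le) hKm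

lemma Mup_le {Km : ℝ} (hKm : 0 ≤ Km) (hp : 0 < p) (hq : 0 < q) (v : ℝ) :
    Mup Km p q v ≤ M Km p q (vstar p q) := by
  unfold Mup; split
  · exact M_le_M_vstar hKm hp hq v
  · exact le_rfl

lemma Mdown_nonpos {Km : ℝ} (hKm : 0 ≤ Km) (hp : 0 < p) (hq : 0 < q) (v : ℝ) :
    Mdown Km p q v ≤ 0 := by
  unfold Mdown; split
  · exact le_rfl
  · linarith [M_le_M_vstar hKm hp hq v]

end Mobility

section Flux

variable {Km : ℝ} {p q : ℕ} {𝒦 : Type*} (μ v : 𝒦 → ℝ) (a b : 𝒦)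

/-- The outgoing mobility `M↑(v a) + M↓(v b)` vanishes: `M↑(v a) = 0` and `M↓ ≤ 0`. -/
lemma Phi_nonpos_of_nonpos (hKm : 0 ≤ Km) (hp : 0 < p) (hq : 0 < q) (ha : v a ≤ 0) :
    Phi Km p q μ v a b ≤ 0 := by
  have hva : v a ≤ vstar p q := ha.trans (vstar_pos hp).le
  have hout : max (Mup Km p q (v a) + Mdown Km p q (v b)) 0 = 0 := by
    rw [Mup, if_pos hva, M_eq_zero_of_nonpos Km hp ha, zero_add]
    exact max_eq_right (Mdown_nonpos hKm hp hq _)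
  rw [Phi, hout, mul_zero, zero_sub, neg_nonpos]
  positivity

/-- The incoming mobility `M↑(v b) + M↓(v a)` is `≤ 0`: `M↓(v a) = -M(v*)` and `M↑ ≤ M(v*)`. -/
lemma Phi_nonneg_of_one_le (hKm : 0 ≤ Km) (hp : 0 < p) (hq : 0 < q) (ha : 1 ≤ v a) :
    0 ≤ Phi Km p q μ v a b := by
  have hva : ¬ v a ≤ vstar p q := by linarith [vstar_lt_one hp hq]
  have hin : max (Mup Km p q (v b) + Mdown Km p q (v a)) 0 = 0 := by
    rw [Mdown, if_neg hva, M_eq_zero_of_one_le Km hq ha, zero_sub]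
    exact max_eq_right (by linarith [Mup_le hKm hp hq (v b)])
  rw [Phi, hin, mul_zero, sub_zero]
  positivity

end Flux

lemma prolif_eq_zero_of_nonpos (KP : ℝ) {r : ℕ} (s : ℕ) (hr : 0 < r) {u : ℝ} (hu : u ≤ 0)
    (n : ℝ) : prolif KP r s u n = 0 := by
  simp [prolif, max_eq_right hu, hr.ne']

lemma prolif_eq_zero_of_one_le (KP : ℝ) (r : ℕ) {s : ℕ} (hs : 0 < s) {u : ℝ} (hu : 1 ≤ u)
    (n : ℝ) : prolif KP r s u n = 0 := by
  simp [prolif, max_eq_right (sub_nonpos.2 hu), hs.ne']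

theorem discrete_pointwise_bounds_u_general (Km : ℝ) (hKm : 0 < Km)
    (p q : ℕ) (hp : 1 ≤ p) (hq : 1 ≤ q)
    (KP : ℝ) (r s : ℕ) (hr : 1 ≤ r) (hs : 1 ≤ s)
    {𝒦 : Type*} [Fintype 𝒦]
    (m : 𝒦 → ℝ) (hm : ∀ K, 0 < m K)
    (adj : 𝒦 → 𝒦 → Prop) [DecidableRel adj]
    (w : 𝒦 → 𝒦 → ℝ)
    (hw_pos : ∀ K L, adj K L → 0 < w K L)
    (Δt : ℝ) (hΔt : 0 < Δt) (Cu : ℝ) (hCu : 0 < Cu)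
    (δ : ℝ) (P₀ : ℝ)
    (um : 𝒦 → ℝ) (hum : ∀ K, um K ∈ Set.Icc (0:ℝ) 1)
    (μ ν n u : 𝒦 → ℝ)
    (hu : ∀ K, m K * (u K - um K) / Δt =
      - Cu * (∑ L, if adj K L then w K L * Phi Km p q μ u K L else 0)
      + δ * P₀ * m K * prolif KP r s (u K) (n K) * max (ν K - μ K) 0) :
    ∀ K, u K ∈ Set.Icc (0:ℝ) 1 := by
  intro K
  set outflow := ∑ L, if adj K L then w K L * Phi Km p q μ u K L else 0
  have balance (hP : prolif KP r s (u K) (n K) = 0) :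
      (u K - um K) * (m K / Δt) = -Cu * outflow := by
    have h := hu K
    rw [hP] at h
    linear_combination h
  have hmΔt : 0 < m K / Δt := div_pos (hm K) hΔt
  constructor
  · by_contra! hneg
    have houtflow : outflow ≤ 0 := Finset.sum_nonpos fun L _ => by
      split_ifs with hKL
      · exact mul_nonpos_of_nonneg_of_nonpos (hw_pos K L hKL).le
          (Phi_nonpos_of_nonpos μ u K L hKm.le hp hq hneg.le)
      · exact le_rfl
    have := balance (prolif_eq_zero_of_nonpos KP s hr hneg.le (n K))
    nlinarith [(hum K).1]
  · by_contra! hgt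
    have houtflow : 0 ≤ outflow := Finset.sum_nonneg fun L _ => by
      split_ifs with hKL
      · exact mul_nonneg (hw_pos K L hKL).le (Phi_nonneg_of_one_le μ u K L hKm.le hp hq hgt.le)
      · exact le_rfl
    have := balance (prolif_eq_zero_of_one_le KP r hs hgt.le (n K))
    nlinarith [(hum K).2]

/-- Discrete pointwise bounds for the tumor variable: any solution of the
discrete `u`-equation of the upwind DG scheme stays in `[0,1]`. -/
theorem discrete_pointwise_bounds_u (Km : ℝ) (hKm : 0 < Km)
    (p q : ℕ) (hp : 1 ≤ p) (hq : 1 ≤ q)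
    (KP : ℝ) (hKP : 0 < KP) (r s : ℕ) (hr : 1 ≤ r) (hs : 1 ≤ s)
    {𝒦 : Type*} [Fintype 𝒦]
    (m : 𝒦 → ℝ) (hm : ∀ K, 0 < m K)
    (adj : 𝒦 → 𝒦 → Prop) [DecidableRel adj]
    (hadj_symm : ∀ K L, adj K L → adj L K) (hadj_irrefl : ∀ K, ¬ adj K K)
    (w : 𝒦 → 𝒦 → ℝ) (hw_symm : ∀ K L, w K L = w L K)
    (hw_pos : ∀ K L, adj K L → 0 < w K L)
    (Δt : ℝ) (hΔt : 0 < Δt) (Cu : ℝ) (hCu : 0 < Cu)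
    (δ : ℝ) (hδ : 0 ≤ δ) (P₀ : ℝ) (hP₀ : 0 ≤ P₀)
    (um : 𝒦 → ℝ) (hum : ∀ K, um K ∈ Set.Icc (0:ℝ) 1)
    (μ ν n u : 𝒦 → ℝ)
    (hu : ∀ K, m K * (u K - um K) / Δt =
      - Cu * (∑ L, if adj K L then w K L * Phi Km p q μ u K L else 0)
      + δ * P₀ * m K * prolif KP r s (u K) (n K) * max (ν K - μ K) 0) :
    ∀ K, u K ∈ Set.Icc (0:ℝ) 1 :=
  discrete_pointwise_bounds_u_general Km hKm p q hp hq KP r s hr hs m hm adj w hw_pos Δt hΔt Cu hCu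
    δ P₀ um hum μ ν n u hu
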